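/- Let f : ℝ² → ℝ² be a C² vector field compactly supported in 𝔻. Then L₁f(x) = 0 for all x ∈ ℝ² if and only if there exists a C³ scalar function φ : ℝ² → ℝ supported in 𝔻 such that f = ∇φ. -/

import Mathlib

open MeasureTheory

noncomputable section

/-- Euclidean dot product on `ℝ × ℝ`. -/
def dot (a b : ℝ × ℝ) : ℝ := a.1 * b.1 + a.2 * b.2

/-- Rotation by `π/2`: `w⊥ = (−w₂, w₁)`. -/
def perp (w : ℝ × ℝ) : ℝ × ℝ := (-w.2, w.1)

/-- The open unit disc in `ℝ²`. -/
def disc : Set (ℝ × ℝ) := {p : ℝ × ℝ | p.1 ^ 2 + p.2 ^ 2 < 1}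

/-- Gradient of a scalar function on `ℝ²`. -/
def grad (φ : ℝ × ℝ → ℝ) (x : ℝ × ℝ) : ℝ × ℝ :=
  (fderiv ℝ φ x (1, 0), fderiv ℝ φ x (0, 1))

/-- Longitudinal V-line transform with weight `α = 1`. -/
def L1 (u v : ℝ × ℝ → ℝ × ℝ) (f : ℝ × ℝ → ℝ × ℝ) (x : ℝ × ℝ) : ℝ :=
  (- ∫ t in Set.Ioi (0 : ℝ), dot (u x) (f (x + t • u x))) +
    ∫ t in Set.Ioi (0 : ℝ), dot (v x) (f (x + t • v x))

/-!
Write `L1 u v f = R_v f - R_u f` with `R_w f x = ∫₀^∞ w(x) · f(x + t w(x)) dt`. If `f = ∇φ`, the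
fundamental theorem of calculus along each ray gives `R_w f = -φ`, so `L1 u v f = 0`.

Conversely, since the integral curves of `w` are straight lines, `R_w f (x + s w(x)) = ∫ₛ^∞ …`
for `s ≥ 0`, so the derivative of `R_w f` at `x` in the direction `w(x)` is `-w(x) · f(x)`.
If `R_u f = R_v f`, the derivative of this function is therefore known on the basis
`u(x), v(x)`, and `φ = -R_u f` has gradient `f`. Outside a closed disc of radius `< 1` containing
`supp f` the function `φ` is locally constant; this region is connected and contains far points
of rays, where `φ` vanishes, so `supp φ` lies in the disc.
-/

open Set Filter Topology Function

theorem dot_comm (a b : ℝ × ℝ) : dot a b = dot b a := by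
  simp only [dot]; ring

theorem dot_zero (a : ℝ × ℝ) : dot a 0 = 0 := by
  simp [dot]

/-- Past this time the ray `t ↦ x + t • a` of a unit direction `a` stays outside the disc. -/
def rayExitTime (x : ℝ × ℝ) : ℝ := 1 + 2 * (|x.1| + |x.2|)

theorem rayExitTime_nonneg (x : ℝ × ℝ) : 0 ≤ rayExitTime x := by
  unfold rayExitTime; positivity

theorem continuous_rayExitTime : Continuous rayExitTime := by
  unfold rayExitTime; fun_prop

theorem add_smul_notMem_disc {a : ℝ × ℝ} (ha : dot a a = 1) (x : ℝ × ℝ) {t : ℝ}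
    (ht : rayExitTime x ≤ t) : x + t • a ∉ disc := by
  obtain ⟨a₁, a₂⟩ := a
  obtain ⟨x₁, x₂⟩ := x
  simp only [dot] at ha
  simp only [rayExitTime] at ht
  simp only [disc, mem_ofPred_eq, not_lt, Prod.mk_add_mk, Prod.smul_mk, smul_eq_mul]
  have ha₁ : |a₁| ≤ 1 := abs_le_one_iff_mul_self_le_one.mpr (by nlinarith)
  have ha₂ : |a₂| ≤ 1 := abs_le_one_iff_mul_self_le_one.mpr (by nlinarith)
  -- `x · a ≥ -(|x₁| + |x₂|)`, so `|x + t a|² ≥ t (t - 2 (|x₁| + |x₂|)) ≥ t ≥ 1`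
  have hxa : -(|x₁| + |x₂|) ≤ x₁ * a₁ + x₂ * a₂ := by
    have h₁ := neg_abs_le (x₁ * a₁)
    have h₂ := neg_abs_le (x₂ * a₂)
    rw [abs_mul] at h₁ h₂
    nlinarith [abs_nonneg x₁, abs_nonneg x₂]
  have ht₀ : 0 ≤ t := by linarith [abs_nonneg x₁, abs_nonneg x₂]
  have hts : t * 1 ≤ t * (t - 2 * (|x₁| + |x₂|)) := mul_le_mul_of_nonneg_left (by linarith) ht₀
  have hexp : (x₁ + t * a₁) ^ 2 + (x₂ + t * a₂) ^ 2
      = x₁ ^ 2 + x₂ ^ 2 + 2 * (t * (x₁ * a₁ + x₂ * a₂)) + t * t := by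
    linear_combination t ^ 2 * ha
  linarith [mul_le_mul_of_nonneg_left hxa ht₀, sq_nonneg x₁, sq_nonneg x₂, abs_nonneg x₁,
    abs_nonneg x₂]

theorem apply_add_smul_eq_zero {E : Type*} [Zero E] {g : ℝ × ℝ → E} (hg : support g ⊆ disc)
    {a : ℝ × ℝ} (ha : dot a a = 1) (x : ℝ × ℝ) {t : ℝ} (ht : rayExitTime x ≤ t) :
    g (x + t • a) = 0 :=
  notMem_support.mp fun h => add_smul_notMem_disc ha x ht (hg h)

theorem setIntegral_Ioi_eq_intervalIntegral {E : Type*} [NormedAddCommGroup E] [NormedSpace ℝ E]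
    {g : ℝ → E} {a R : ℝ} (haR : a ≤ R) (hg : ∀ t, R ≤ t → g t = 0) :
    ∫ t in Ioi a, g t = ∫ t in a..R, g t := by
  rw [intervalIntegral.integral_of_le haR,
    setIntegral_eq_of_subset_of_forall_sdiff_eq_zero measurableSet_Ioi Ioc_subset_Ioi_self]
  rintro t ⟨hat, htR⟩
  exact hg t (not_le.mp fun h => htR ⟨hat, h⟩).le

theorem differentiable_intervalIntegral_of_contDiff {E G : Type*}
    [NormedAddCommGroup E] [NormedSpace ℝ E] [ProperSpace E]
    [NormedAddCommGroup G] [NormedSpace ℝ G]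
    {F : E → ℝ → G} (hF : ContDiff ℝ 1 (uncurry F)) (a b : ℝ) :
    Differentiable ℝ fun x => ∫ t in a..b, F x t := by
  intro x₀
  set F' : E → ℝ → E →L[ℝ] G := fun x t =>
    (fderiv ℝ (uncurry F) (x, t)).comp ((ContinuousLinearMap.id ℝ E).prod 0)
  have hF' : Continuous (uncurry F') :=
    (hF.continuous_fderiv one_ne_zero).clm_comp continuous_const
  have hderiv : ∀ x t, HasFDerivAt (F · t) (F' x t) x := by
    intro x t
    have hslice : HasFDerivAt (fun y : E => (y, t)) ((ContinuousLinearMap.id ℝ E).prod 0) x :=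
      (hasFDerivAt_id x).prodMk (hasFDerivAt_const t x)
    exact (hF.differentiable one_ne_zero (x, t)).hasFDerivAt.comp (g := uncurry F) x hslice
  have hcont : ∀ x, Continuous (F x) := fun x =>
    hF.continuous.comp (continuous_const.prodMk continuous_id)
  obtain ⟨C, hC⟩ := ((isCompact_closedBall x₀ 1).prod isCompact_uIcc).exists_bound_of_continuousOn
    hF'.continuousOn
  exact (intervalIntegral.hasFDerivAt_integral_of_dominated_of_fderiv_le (bound := fun _ => C)
    (Metric.ball_mem_nhds x₀ one_pos) (Eventually.of_forall fun x => (hcont x).aestronglyMeasurable)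
    ((hcont x₀).intervalIntegrable a b)
    (hF'.comp (continuous_const.prodMk continuous_id)).aestronglyMeasurable
    (Eventually.of_forall fun t ht x hx =>
      hC (x, t) ⟨Metric.ball_subset_closedBall hx, uIoc_subset_uIcc ht⟩)
    intervalIntegrable_const
    (Eventually.of_forall fun t _ x _ => hderiv x t)).differentiableAt

def rayIntegral (w f : ℝ × ℝ → ℝ × ℝ) (x : ℝ × ℝ) : ℝ :=
  ∫ t in Ioi (0 : ℝ), dot (w x) (f (x + t • w x))

theorem L1_eq_sub (u v f : ℝ × ℝ → ℝ × ℝ) (x : ℝ × ℝ) :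
    L1 u v f x = rayIntegral v f x - rayIntegral u f x := by
  rw [L1, rayIntegral, rayIntegral]; ring

section RayIntegral

variable {w f : ℝ × ℝ → ℝ × ℝ}

theorem rayIntegral_eq_intervalIntegral (hunit : ∀ x, dot (w x) (w x) = 1)
    (hsupp : support f ⊆ disc) {x : ℝ × ℝ} {R : ℝ} (hR : rayExitTime x ≤ R) :
    rayIntegral w f x = ∫ t in 0..R, dot (w x) (f (x + t • w x)) :=
  setIntegral_Ioi_eq_intervalIntegral ((rayExitTime_nonneg x).trans hR) fun t ht => by
    rw [apply_add_smul_eq_zero hsupp (hunit x) x (hR.trans ht), dot_zero]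

theorem rayIntegral_add_smul (hline : ∀ (x : ℝ × ℝ) (t : ℝ), 0 ≤ t → w (x + t • w x) = w x)
    (hunit : ∀ x, dot (w x) (w x) = 1) (hsupp : support f ⊆ disc) {x : ℝ × ℝ} {s R : ℝ}
    (hs : 0 ≤ s) (hsR : s ≤ R) (hR : rayExitTime x ≤ R) :
    rayIntegral w f (x + s • w x) = ∫ t in s..R, dot (w x) (f (x + t • w x)) := by
  have hshift : ∀ t : ℝ, x + s • w x + t • w x = x + (t + s) • w x := fun t => by
    rw [add_smul]; abel
  rw [rayIntegral, hline x s hs]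
  simp_rw [hshift]
  rw [setIntegral_Ioi_eq_intervalIntegral (sub_nonneg.mpr hsR) fun t ht => ?_,
    intervalIntegral.integral_comp_add_right (fun t => dot (w x) (f (x + t • w x))), zero_add,
    sub_add_cancel]
  rw [apply_add_smul_eq_zero hsupp (hunit x) x (by linarith), dot_zero]

theorem differentiable_rayIntegral (hw : ContDiff ℝ 1 w) (hf : ContDiff ℝ 1 f)
    (hunit : ∀ x, dot (w x) (w x) = 1) (hsupp : support f ⊆ disc) :
    Differentiable ℝ (rayIntegral w f) := by
  intro x₀
  have hF : ContDiff ℝ 1 (uncurry fun x (t : ℝ) => dot (w x) (f (x + t • w x))) := by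
    simp only [dot, uncurry_def]; fun_prop
  refine (differentiable_intervalIntegral_of_contDiff hF 0 (rayExitTime x₀ + 1) x₀
    ).congr_of_eventuallyEq ?_
  filter_upwards [continuous_rayExitTime.continuousAt.eventually_lt continuousAt_const
    (lt_add_one _)] with x hx
  exact rayIntegral_eq_intervalIntegral hunit hsupp hx.le

theorem fderiv_rayIntegral_apply_self
    (hline : ∀ (x : ℝ × ℝ) (t : ℝ), 0 ≤ t → w (x + t • w x) = w x)
    (hunit : ∀ x, dot (w x) (w x) = 1) (hf : Continuous f) (hsupp : support f ⊆ disc)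
    {x : ℝ × ℝ} (hd : DifferentiableAt ℝ (rayIntegral w f) x) :
    fderiv ℝ (rayIntegral w f) x (w x) = -dot (w x) (f x) := by
  set g : ℝ → ℝ := fun t => dot (w x) (f (x + t • w x))
  have hg : Continuous g := by simp only [g, dot]; fun_prop
  set R := rayExitTime x + 1
  have hR : 0 < R := by have := rayExitTime_nonneg x; positivity
  -- along the ray the integral is `∫ s..R, g`, whose right derivative at `0` is `-g 0`
  have hright :
      HasDerivWithinAt (fun s => rayIntegral w f (x + s • w x)) (-g 0) (Ici (0 : ℝ)) 0 := by
    refine (intervalIntegral.integral_hasDerivAt_left (hg.intervalIntegrable 0 R)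
      hg.stronglyMeasurable.stronglyMeasurableAtFilter hg.continuousAt).hasDerivWithinAt
      |>.congr_of_eventuallyEq ?_ ?_
    · filter_upwards [Icc_mem_nhdsGE hR] with s hs
      exact rayIntegral_add_smul hline hunit hsupp hs.1 hs.2 (by linarith)
    · exact rayIntegral_add_smul hline hunit hsupp le_rfl hR.le (by linarith)
  have hray : HasDerivAt (fun s : ℝ => x + s • w x) (w x) 0 := by
    simpa using ((hasDerivAt_id (0 : ℝ)).smul_const (w x)).const_add x
  have htwo : HasDerivAt (fun s : ℝ => rayIntegral w f (x + s • w x))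
      (fderiv ℝ (rayIntegral w f) x (w x)) 0 :=
    hd.hasFDerivAt.comp_hasDerivAt_of_eq 0 hray (by simp)
  rw [(uniqueDiffOn_Ici (0 : ℝ) 0 self_mem_Ici).eq_deriv _ htwo.hasDerivWithinAt hright]
  simp [g]

end RayIntegral

def dotL : (ℝ × ℝ) →L[ℝ] (ℝ × ℝ) →L[ℝ] ℝ :=
  (ContinuousLinearMap.fst ℝ ℝ ℝ).smulRight (ContinuousLinearMap.fst ℝ ℝ ℝ) +
    (ContinuousLinearMap.snd ℝ ℝ ℝ).smulRight (ContinuousLinearMap.snd ℝ ℝ ℝ)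

@[simp]
theorem dotL_apply (a b : ℝ × ℝ) : dotL a b = dot a b := by
  simp [dotL, dot]

theorem fderiv_apply_eq_dot_grad (φ : ℝ × ℝ → ℝ) (y b : ℝ × ℝ) :
    fderiv ℝ φ y b = dot b (grad φ y) := by
  have hb : b = b.1 • ((1 : ℝ), (0 : ℝ)) + b.2 • ((0 : ℝ), (1 : ℝ)) := by ext <;> simp
  conv_lhs => rw [hb]
  simp only [map_add, map_smul, grad, dot, smul_eq_mul]

theorem grad_eq_of_fderiv_eq_dotL {φ : ℝ × ℝ → ℝ} {y a : ℝ × ℝ} (h : fderiv ℝ φ y = dotL a) :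
    grad φ y = a := by
  simp [grad, h, dot]

theorem continuous_grad {φ : ℝ × ℝ → ℝ} (hφ : ContDiff ℝ 1 φ) : Continuous (grad φ) :=
  have h := hφ.continuous_fderiv one_ne_zero
  (h.clm_apply continuous_const).prodMk (h.clm_apply continuous_const)

theorem support_grad_subset (φ : ℝ × ℝ → ℝ) : support (grad φ) ⊆ tsupport φ := fun y hy =>
  support_fderiv_subset ℝ fun h => hy (by simp [grad, h])

theorem rayIntegral_grad {w : ℝ × ℝ → ℝ × ℝ} (hunit : ∀ x, dot (w x) (w x) = 1)
    {φ : ℝ × ℝ → ℝ} (hφ : ContDiff ℝ 1 φ) (hsupp : tsupport φ ⊆ disc) (x : ℝ × ℝ) :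
    rayIntegral w (grad φ) x = -φ x := by
  have hderiv : ∀ t : ℝ,
      HasDerivAt (fun s : ℝ => φ (x + s • w x)) (dot (w x) (grad φ (x + t • w x))) t := by
    intro t
    have hray : HasDerivAt (fun s : ℝ => x + s • w x) (w x) t := by
      simpa using ((hasDerivAt_id t).smul_const (w x)).const_add x
    rw [← fderiv_apply_eq_dot_grad]
    exact (hφ.differentiable one_ne_zero _).hasFDerivAt.comp_hasDerivAt t hray
  have hcont : Continuous fun t : ℝ => dot (w x) (grad φ (x + t • w x)) := by
    have := continuous_grad hφ
    simp only [dot]; fun_prop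
  rw [rayIntegral_eq_intervalIntegral hunit ((support_grad_subset φ).trans hsupp) le_rfl,
    intervalIntegral.integral_eq_sub_of_hasDerivAt (fun t _ => hderiv t)
      (hcont.intervalIntegrable _ _),
    apply_add_smul_eq_zero ((subset_tsupport φ).trans hsupp) (hunit x) x le_rfl, zero_sub,
    zero_smul, add_zero]

/-- The derivative of `rayIntegral u f = rayIntegral v f` is known in two independent directions. -/
theorem fderiv_neg_rayIntegral_of_eq {u v f : ℝ × ℝ → ℝ × ℝ}
    (hlineu : ∀ (x : ℝ × ℝ) (t : ℝ), 0 ≤ t → u (x + t • u x) = u x)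
    (hlinev : ∀ (x : ℝ × ℝ) (t : ℝ), 0 ≤ t → v (x + t • v x) = v x)
    (hunitu : ∀ x, dot (u x) (u x) = 1) (hunitv : ∀ x, dot (v x) (v x) = 1)
    (hf : Continuous f) (hsupp : support f ⊆ disc) (huv : rayIntegral u f = rayIntegral v f)
    {x : ℝ × ℝ} (hind : LinearIndependent ℝ ![u x, v x])
    (hd : DifferentiableAt ℝ (rayIntegral u f) x) :
    fderiv ℝ (-rayIntegral u f) x = dotL (f x) := by
  rw [fderiv_neg]
  refine neg_eq_iff_eq_neg.mpr <| ContinuousLinearMap.coe_injective <| LinearMap.ext_on_range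
    (hind.span_eq_top_of_card_eq_finrank' (by simp)) (Fin.forall_fin_two.mpr ⟨?_, ?_⟩)
  · simp [fderiv_rayIntegral_apply_self hlineu hunitu hf hsupp hd, dot_comm]
  · rw [huv] at hd ⊢
    simp [fderiv_rayIntegral_apply_self hlinev hunitv hf hsupp hd, dot_comm]

theorem isPreconnected_setOf_lt_sq_add_sq {c : ℝ} (hc : 0 ≤ c) :
    IsPreconnected {p : ℝ × ℝ | c < p.1 ^ 2 + p.2 ^ 2} := by
  have hpolar : {p : ℝ × ℝ | c < p.1 ^ 2 + p.2 ^ 2} =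
      (fun q : ℝ × ℝ => (q.1 * Real.cos q.2, q.1 * Real.sin q.2)) '' (Ioi √c ×ˢ univ) := by
    ext p
    constructor
    · intro hp
      set z : ℂ := ⟨p.1, p.2⟩
      refine ⟨(‖z‖, z.arg), ⟨?_, trivial⟩, ?_⟩
      · rw [mem_Ioi, Complex.norm_eq_sqrt_sq_add_sq]
        exact Real.sqrt_lt_sqrt hc hp
      · simp only [Complex.norm_mul_cos_arg, Complex.norm_mul_sin_arg, z]
    · rintro ⟨⟨r, θ⟩, ⟨hr, -⟩, rfl⟩
      have := Real.lt_sq_of_sqrt_lt hr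
      simp only [mem_ofPred_eq]
      nlinarith [Real.sin_sq_add_cos_sq θ]
  rw [hpolar]
  exact (isPreconnected_Ioi.prod isPreconnected_univ).image _
    (by fun_prop : Continuous _).continuousOn

theorem IsCompact.exists_sq_add_sq_le_lt_one {K : Set (ℝ × ℝ)} (hK : IsCompact K)
    (hKd : K ⊆ disc) :
    ∃ c, 0 ≤ c ∧ c < 1 ∧ ∀ p ∈ K, p.1 ^ 2 + p.2 ^ 2 ≤ c := by
  rcases K.eq_empty_or_nonempty with rfl | hne
  · exact ⟨0, le_rfl, one_pos, by simp⟩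
  obtain ⟨q, hq, hmax⟩ := hK.exists_isMaxOn hne
    (by fun_prop : Continuous fun p : ℝ × ℝ => p.1 ^ 2 + p.2 ^ 2).continuousOn
  exact ⟨_, by positivity, hKd hq, hmax⟩

theorem tsupport_subset_disc_of_fderiv_eq_zero {φ : ℝ × ℝ → ℝ} (hφ : Differentiable ℝ φ)
    {K : Set (ℝ × ℝ)} (hK : IsCompact K) (hKd : K ⊆ disc) (hfd : ∀ p ∉ K, fderiv ℝ φ p = 0)
    {p₀ : ℝ × ℝ} (hp₀ : p₀ ∉ disc) (hφp₀ : φ p₀ = 0) : tsupport φ ⊆ disc := by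
  -- `φ` is constant on the connected complement of a closed disc of radius `< 1` containing `K`
  obtain ⟨c, hc₀, hc₁, hKc⟩ := hK.exists_sq_add_sq_le_lt_one hKd
  set S := {p : ℝ × ℝ | c < p.1 ^ 2 + p.2 ^ 2}
  have hS : IsOpen S := isOpen_lt continuous_const (by fun_prop)
  have hp₀S : p₀ ∈ S := hc₁.trans_le (not_lt.mp hp₀)
  have hzero : ∀ p ∈ S, φ p = 0 := fun p hp => by
    rw [← hφp₀]
    exact hS.is_const_of_fderiv_eq_zero (isPreconnected_setOf_lt_sq_add_sq hc₀)
      hφ.differentiableOn (fun q hq => hfd q fun hqK => (hKc q hqK).not_gt hq) hp hp₀S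
  have hsub : support φ ⊆ {p | p.1 ^ 2 + p.2 ^ 2 ≤ c} := fun p hp =>
    show _ ≤ c from not_lt.mp fun h => hp (hzero p h)
  exact (closure_minimal hsub (isClosed_le (by fun_prop) continuous_const)).trans
    fun p hp => hp.trans_lt hc₁

theorem stmt5_general
    (u v : ℝ × ℝ → ℝ × ℝ) (hu : ContDiff ℝ 1 u)
    (hunitu : ∀ x, dot (u x) (u x) = 1) (hunitv : ∀ x, dot (v x) (v x) = 1)
    (hlineu : ∀ (x : ℝ × ℝ) (t : ℝ), 0 ≤ t → u (x + t • u x) = u x)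
    (hlinev : ∀ (x : ℝ × ℝ) (t : ℝ), 0 ≤ t → v (x + t • v x) = v x)
    (hind : ∀ x, LinearIndependent ℝ ![u x, v x])
    (f : ℝ × ℝ → ℝ × ℝ) (hf : ContDiff ℝ 2 f)
    (hcs : HasCompactSupport f) (hsupp : tsupport f ⊆ disc) :
    (∀ x, L1 u v f x = 0) ↔
      ∃ φ : ℝ × ℝ → ℝ, ContDiff ℝ 3 φ ∧ tsupport φ ⊆ disc ∧ ∀ x, f x = grad φ x := by
  have hsuppf : support f ⊆ disc := (subset_tsupport f).trans hsupp
  constructor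
  · intro hL
    have hΦ : Differentiable ℝ (rayIntegral u f) :=
      differentiable_rayIntegral hu (hf.of_le one_le_two) hunitu hsuppf
    have huv : rayIntegral u f = rayIntegral v f :=
      funext fun x => (sub_eq_zero.mp ((L1_eq_sub u v f x).symm.trans (hL x))).symm
    have hfd : ∀ x, fderiv ℝ (-rayIntegral u f) x = dotL (f x) := fun x =>
      fderiv_neg_rayIntegral_of_eq hlineu hlinev hunitu hunitv hf.continuous hsuppf huv (hind x)
        (hΦ x)
    refine ⟨-rayIntegral u f, ?_, ?_, fun x => (grad_eq_of_fderiv_eq_dotL (hfd x)).symm⟩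
    · rw [show (3 : WithTop ℕ∞) = 2 + 1 from rfl, contDiff_succ_iff_fderiv, funext hfd]
      exact ⟨hΦ.neg, by simp, dotL.contDiff.comp hf⟩
    · have hexit : rayExitTime 0 ≤ 1 := by simp [rayExitTime]
      refine tsupport_subset_disc_of_fderiv_eq_zero hΦ.neg hcs hsupp
        (fun p hp => by rw [hfd, image_eq_zero_of_notMem_tsupport hp, map_zero])
        (add_smul_notMem_disc (hunitu 0) 0 hexit) ?_
      rw [Pi.neg_apply, rayIntegral_add_smul hlineu hunitu hsuppf zero_le_one le_rfl hexit,
        intervalIntegral.integral_same, neg_zero]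
  · rintro ⟨φ, hφ, hφsupp, hgrad⟩ x
    obtain rfl : f = grad φ := funext hgrad
    have hφ₁ : ContDiff ℝ 1 φ := hφ.of_le (by norm_num)
    rw [L1_eq_sub, rayIntegral_grad hunitv hφ₁ hφsupp, rayIntegral_grad hunitu hφ₁ hφsupp,
      sub_self]

theorem stmt5
    (u v : ℝ × ℝ → ℝ × ℝ) (hu : ContDiff ℝ 1 u) (hv : ContDiff ℝ 1 v)
    (hunitu : ∀ x, dot (u x) (u x) = 1) (hunitv : ∀ x, dot (v x) (v x) = 1)
    (hlineu : ∀ (x : ℝ × ℝ) (t : ℝ), 0 ≤ t → u (x + t • u x) = u x)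
    (hlinev : ∀ (x : ℝ × ℝ) (t : ℝ), 0 ≤ t → v (x + t • v x) = v x)
    (hind : ∀ x, LinearIndependent ℝ ![u x, v x])
    (f : ℝ × ℝ → ℝ × ℝ) (hf : ContDiff ℝ 2 f)
    (hcs : HasCompactSupport f) (hsupp : tsupport f ⊆ disc) :
    (∀ x, L1 u v f x = 0) ↔
      ∃ φ : ℝ × ℝ → ℝ, ContDiff ℝ 3 φ ∧ tsupport φ ⊆ disc ∧ ∀ x, f x = grad φ x :=
  stmt5_general u v hu hunitu hunitv hlineu hlinev hind f hf hcs hsupp
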